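/- Theorem 3.6: Let (U, Δ, 𝒟) be a covering decision information system with Δ = (𝒞₁, …, 𝒞ₘ), let 𝒞ₘ⁺ be a refinement of 𝒞ₘ and Δ⁺ = (𝒞₁, …, 𝒞ₘ₋₁, 𝒞ₘ⁺). Assume ⋃𝒜_{𝒞ₘ} ⊆ ⋃𝒜_{𝒞ₘ⁺} and POS_{∪Δ⁺}(𝒟) ≠ POS_{∪Δ}(𝒟). Then 𝓡(U,Δ⁺,𝒟) equals the set of all P ⊆ {1,…,m} such that m ∈ P and P is minimal among m-containing sets Q with Q ∩ r(x) ≠ ∅ for every x ∈ POS_{∪Δ}(𝒟) \ ⋃𝒜_{𝒞ₘ⁺}. -/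

import Mathlib

/-!
Replacing the last covering only changes the related sets at the last index: afterwards
`m ∈ r⁺(x)` exactly for `x ∈ ⋃𝒜_{𝒞ₘ⁺}`, and by `⋃𝒜_{𝒞ₘ} ⊆ ⋃𝒜_{𝒞ₘ⁺}` outside this set
`r⁺(x) = r(x)`. Since the positive region grows strictly, some `x₀` has `r⁺(x₀) = {m}`,
so every set meeting all `r⁺(x)` on `POS_{∪Δ⁺}(𝒟)` contains `m`. Given `m ∈ P`, the
points of `⋃𝒜_{𝒞ₘ⁺}` are hit automatically, and the remaining condition is the one
relative to `r` on `POS_{∪Δ}(𝒟) \ ⋃𝒜_{𝒞ₘ⁺}`. The two covering conditions thus agree on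
every set, hence so do their minimal elements.
-/

open Set

/-- A covering of `U`: a family of nonempty subsets whose union is all of `U`. -/
def IsCovering {U : Type*} (𝒞 : Set (Set U)) : Prop :=
  (∀ C ∈ 𝒞, C.Nonempty) ∧ ⋃₀ 𝒞 = Set.univ

/-- A partition of `U`: a covering whose blocks are pairwise disjoint. -/
def IsPartitionC {U : Type*} (𝒟 : Set (Set U)) : Prop :=
  IsCovering 𝒟 ∧ ∀ D₁ ∈ 𝒟, ∀ D₂ ∈ 𝒟, D₁ ≠ D₂ → Disjoint D₁ D₂

/-- `𝒜_𝒞 = {C ∈ 𝒞 : ∃ D ∈ 𝒟, C ⊆ D}`: blocks of `𝒞` contained in some decision class. -/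
def goodBlocks {U : Type*} (𝒟 𝒞 : Set (Set U)) : Set (Set U) :=
  {C ∈ 𝒞 | ∃ D ∈ 𝒟, C ⊆ D}

/-- The related set `r(x)` of `x`: indices `i` such that some block of `𝒞ᵢ` contains `x`
and is contained in some decision class. -/
def relSet {U : Type*} {m : ℕ} (Δ : Fin m → Set (Set U)) (𝒟 : Set (Set U)) (x : U) :
    Set (Fin m) :=
  {i | ∃ C ∈ Δ i, x ∈ C ∧ ∃ D ∈ 𝒟, C ⊆ D}

/-- The positive region `POS_{∪Δ}(𝒟) = ⋃_{D ∈ 𝒟} ⋃ {K : K a block of some 𝒞ᵢ, K ⊆ D}`. -/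
def POS {U : Type*} {m : ℕ} (Δ : Fin m → Set (Set U)) (𝒟 : Set (Set U)) : Set U :=
  ⋃ D ∈ 𝒟, ⋃₀ {K | (∃ i, K ∈ Δ i) ∧ K ⊆ D}

/-- `𝒞'` refines `𝒞` (and `𝒞` coarsens `𝒞'`): every block of `𝒞'` is inside a block of `𝒞`. -/
def Refines {U : Type*} (𝒞' 𝒞 : Set (Set U)) : Prop :=
  ∀ C ∈ 𝒞', ∃ C₀ ∈ 𝒞, C ⊆ C₀

/-- `P` is a reduct of `(U, Δ, 𝒟)`: `P` meets `r(x)` for every `x` in the positive region,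
and no proper subset of `P` has this property. -/
def IsReduct {U : Type*} {m : ℕ} (Δ : Fin m → Set (Set U)) (𝒟 : Set (Set U))
    (P : Set (Fin m)) : Prop :=
  (∀ x ∈ POS Δ 𝒟, (P ∩ relSet Δ 𝒟 x).Nonempty) ∧
  ∀ Q : Set (Fin m), Q ⊂ P → ¬ (∀ x ∈ POS Δ 𝒟, (Q ∩ relSet Δ 𝒟 x).Nonempty)

section Update

variable {U : Type*} {n : ℕ} {Δ : Fin n → Set (Set U)} {𝒟 : Set (Set U)}

theorem mem_POS_iff {x : U} : x ∈ POS Δ 𝒟 ↔ (relSet Δ 𝒟 x).Nonempty := by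
  simp only [POS, relSet, mem_iUnion, mem_sUnion, mem_ofPred_eq]
  constructor
  · rintro ⟨D, hD, K, ⟨⟨i, hK⟩, hKD⟩, hx⟩
    exact ⟨i, K, hK, hx, D, hD, hKD⟩
  · rintro ⟨i, C, hC, hx, D, hD, hCD⟩
    exact ⟨D, hD, C, ⟨⟨i, hC⟩, hCD⟩, hx⟩

theorem mem_relSet_iff {x : U} {i : Fin n} :
    i ∈ relSet Δ 𝒟 x ↔ x ∈ ⋃₀ goodBlocks 𝒟 (Δ i) := by
  simp only [relSet, goodBlocks, mem_sUnion, mem_ofPred_eq]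
  tauto

theorem mem_relSet_update_of_ne {x : U} {i j : Fin n} (hij : i ≠ j) (𝒞 : Set (Set U)) :
    i ∈ relSet (Function.update Δ j 𝒞) 𝒟 x ↔ i ∈ relSet Δ 𝒟 x := by
  simp only [relSet, mem_ofPred_eq, Function.update_of_ne hij]

theorem mem_relSet_update_self {x : U} {j : Fin n} {𝒞 : Set (Set U)} :
    j ∈ relSet (Function.update Δ j 𝒞) 𝒟 x ↔ x ∈ ⋃₀ goodBlocks 𝒟 𝒞 := by
  rw [mem_relSet_iff, Function.update_self]

variable {j : Fin n} {𝒞 : Set (Set U)}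

theorem relSet_update_of_notMem (hmono : ⋃₀ goodBlocks 𝒟 (Δ j) ⊆ ⋃₀ goodBlocks 𝒟 𝒞)
    {x : U} (hx : x ∉ ⋃₀ goodBlocks 𝒟 𝒞) :
    relSet (Function.update Δ j 𝒞) 𝒟 x = relSet Δ 𝒟 x := by
  ext i
  rcases eq_or_ne i j with rfl | hij
  · rw [mem_relSet_update_self, mem_relSet_iff]
    exact ⟨fun h => absurd h hx, fun h => absurd (hmono h) hx⟩
  · exact mem_relSet_update_of_ne hij 𝒞

theorem POS_subset_POS_update (hmono : ⋃₀ goodBlocks 𝒟 (Δ j) ⊆ ⋃₀ goodBlocks 𝒟 𝒞) :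
    POS Δ 𝒟 ⊆ POS (Function.update Δ j 𝒞) 𝒟 := by
  intro x hx
  by_cases hx𝒞 : x ∈ ⋃₀ goodBlocks 𝒟 𝒞
  · exact mem_POS_iff.2 ⟨j, mem_relSet_update_self.2 hx𝒞⟩
  · rwa [mem_POS_iff, relSet_update_of_notMem hmono hx𝒞, ← mem_POS_iff]

theorem exists_relSet_update_eq_singleton
    (hmono : ⋃₀ goodBlocks 𝒟 (Δ j) ⊆ ⋃₀ goodBlocks 𝒟 𝒞)
    (hne : POS (Function.update Δ j 𝒞) 𝒟 ≠ POS Δ 𝒟) :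
    ∃ x, relSet (Function.update Δ j 𝒞) 𝒟 x = {j} := by
  obtain ⟨x, hx, hxΔ⟩ := exists_of_ssubset ((POS_subset_POS_update hmono).ssubset_of_ne hne.symm)
  refine ⟨x, (mem_POS_iff.1 hx).subset_singleton_iff.1 fun i hi => ?_⟩
  by_contra hij
  exact hxΔ (mem_POS_iff.2 ⟨i, (mem_relSet_update_of_ne hij 𝒞).1 hi⟩)

theorem hits_POS_update_iff (hmono : ⋃₀ goodBlocks 𝒟 (Δ j) ⊆ ⋃₀ goodBlocks 𝒟 𝒞)
    (hne : POS (Function.update Δ j 𝒞) 𝒟 ≠ POS Δ 𝒟) (P : Set (Fin n)) :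
    (∀ x ∈ POS (Function.update Δ j 𝒞) 𝒟, (P ∩ relSet (Function.update Δ j 𝒞) 𝒟 x).Nonempty) ↔
      j ∈ P ∧ ∀ x ∈ POS Δ 𝒟 \ ⋃₀ goodBlocks 𝒟 𝒞, (P ∩ relSet Δ 𝒟 x).Nonempty := by
  constructor
  · intro hP
    refine ⟨?_, fun x ⟨hxΔ, hx𝒞⟩ => ?_⟩
    · obtain ⟨x₀, hx₀⟩ := exists_relSet_update_eq_singleton hmono hne
      obtain ⟨i, hiP, hi⟩ := hP x₀ (mem_POS_iff.2 (hx₀ ▸ singleton_nonempty j))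
      rw [hx₀, mem_singleton_iff] at hi
      exact hi ▸ hiP
    · rw [← relSet_update_of_notMem hmono hx𝒞]
      exact hP x (POS_subset_POS_update hmono hxΔ)
  · rintro ⟨hjP, hP⟩ x hx
    by_cases hx𝒞 : x ∈ ⋃₀ goodBlocks 𝒟 𝒞
    · exact ⟨j, hjP, mem_relSet_update_self.2 hx𝒞⟩
    · rw [mem_POS_iff, relSet_update_of_notMem hmono hx𝒞, ← mem_POS_iff] at hx
      rw [relSet_update_of_notMem hmono hx𝒞]
      exact hP x ⟨hx, hx𝒞⟩

end Update

theorem stmt10_general {U : Type*} {m : ℕ}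
    (Δ : Fin (m + 1) → Set (Set U)) (𝒟 : Set (Set U))
    (Cp : Set (Set U))
    (Δp : Fin (m + 1) → Set (Set U))
    (hΔp : Δp = Function.update Δ (Fin.last m) Cp)
    (hmono : ⋃₀ goodBlocks 𝒟 (Δ (Fin.last m)) ⊆ ⋃₀ goodBlocks 𝒟 Cp)
    (hne : POS Δp 𝒟 ≠ POS Δ 𝒟) :
    {P : Set (Fin (m + 1)) | IsReduct Δp 𝒟 P} =
      {P : Set (Fin (m + 1)) |
        (Fin.last m ∈ P ∧
          ∀ x ∈ POS Δ 𝒟 \ ⋃₀ goodBlocks 𝒟 Cp, (P ∩ relSet Δ 𝒟 x).Nonempty) ∧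
        (∀ Q : Set (Fin (m + 1)), Q ⊂ P →
          ¬ (Fin.last m ∈ Q ∧
              ∀ x ∈ POS Δ 𝒟 \ ⋃₀ goodBlocks 𝒟 Cp, (Q ∩ relSet Δ 𝒟 x).Nonempty))} := by
  subst hΔp
  ext P
  simp only [mem_ofPred_eq, IsReduct, hits_POS_update_iff hmono hne]

/-- Theorem 3.6: assuming `⋃𝒜_{𝒞ₘ} ⊆ ⋃𝒜_{𝒞ₘ⁺}` and
`POS_{∪Δ⁺}(𝒟) ≠ POS_{∪Δ}(𝒟)`, the reducts of `(U, Δ⁺, 𝒟)` are exactly the `m`-containing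
sets minimal among `m`-containing sets `Q` with `Q ∩ r(x) ≠ ∅` for every
`x ∈ POS_{∪Δ}(𝒟) \ ⋃𝒜_{𝒞ₘ⁺}`. -/
theorem stmt10 {U : Type*} [Finite U] [Nonempty U] {m : ℕ}
    (Δ : Fin (m + 1) → Set (Set U)) (𝒟 : Set (Set U))
    (hΔ : ∀ i, IsCovering (Δ i)) (h𝒟 : IsPartitionC 𝒟)
    (Cp : Set (Set U)) (hCp : IsCovering Cp)
    (href : Refines Cp (Δ (Fin.last m)))
    (Δp : Fin (m + 1) → Set (Set U))
    (hΔp : Δp = Function.update Δ (Fin.last m) Cp)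
    (hmono : ⋃₀ goodBlocks 𝒟 (Δ (Fin.last m)) ⊆ ⋃₀ goodBlocks 𝒟 Cp)
    (hne : POS Δp 𝒟 ≠ POS Δ 𝒟) :
    {P : Set (Fin (m + 1)) | IsReduct Δp 𝒟 P} =
      {P : Set (Fin (m + 1)) |
        (Fin.last m ∈ P ∧
          ∀ x ∈ POS Δ 𝒟 \ ⋃₀ goodBlocks 𝒟 Cp, (P ∩ relSet Δ 𝒟 x).Nonempty) ∧
        (∀ Q : Set (Fin (m + 1)), Q ⊂ P →
          ¬ (Fin.last m ∈ Q ∧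
              ∀ x ∈ POS Δ 𝒟 \ ⋃₀ goodBlocks 𝒟 Cp, (Q ∩ relSet Δ 𝒟 x).Nonempty))} :=
  stmt10_general Δ 𝒟 Cp Δp hΔp hmono hne
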